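/- arXiv:2310.06864 — 7 statements merged into one kernel-verified Lean document; each statement's English description precedes it below -/
import Mathlib

section
/- For each natural number n, the two-variable Hermite polynomial Z(x,y) = H_n(x,y) = n! * ∑_{r=0}^{⌊n/2⌋} y^r x^(n-2r) / ((n-2r)! r!) satisfies the heat equation ∂Z/∂y = ∂²Z/∂x², i.e., the partial derivative of H_n(x,y) with respect to y equals the second partial derivative with respect to x, for all real x, y. -/
/-!
`H n x y / n!` is the coefficient of `t ^ n` in `exp (x * t + y * t ^ 2)`. Differentiating the
finite sum termwise gives `∂ₓ H (n + 1) = (n + 1) H n` and `∂ᵧ H (n + 2) = (n + 2) (n + 1) H n`, so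
both sides of the heat equation for `H (n + 2)` equal `(n + 2) (n + 1) H n`; `H 0 = 1` and `H 1 = x`
are killed by both operators.
-/

/-- Two-variable Hermite (heat) polynomials. -/
noncomputable def H (n : ℕ) (x y : ℝ) : ℝ :=
  (n.factorial : ℝ) * ∑ r ∈ Finset.range (n / 2 + 1),
    y ^ r * x ^ (n - 2 * r) / (((n - 2 * r).factorial : ℝ) * (r.factorial : ℝ))

open Finset Nat

theorem hasDerivAt_pow_succ_div_factorial {𝕜 : Type*} [NontriviallyNormedField 𝕜] [CharZero 𝕜]
    (m : ℕ) (x : 𝕜) :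
    HasDerivAt (fun x => x ^ (m + 1) / ((m + 1)! : 𝕜)) (x ^ m / (m ! : 𝕜)) x := by
  have h := (hasDerivAt_pow (m + 1) x).div_const ((m + 1)! : 𝕜)
  have hcoeff : ((m + 1 : ℕ) : 𝕜) * x ^ m / ((m + 1)! : 𝕜) = x ^ m / (m ! : 𝕜) := by
    rw [factorial_succ, cast_mul, mul_div_mul_left _ _ (cast_ne_zero.mpr m.succ_ne_zero)]
  rwa [Nat.add_sub_cancel, hcoeff] at h

noncomputable def scaledH (n : ℕ) (x y : ℝ) : ℝ :=
  ∑ r ∈ range (n / 2 + 1), y ^ r / (r ! : ℝ) * (x ^ (n - 2 * r) / ((n - 2 * r)! : ℝ))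

theorem H_eq_factorial_mul_scaledH (n : ℕ) (x y : ℝ) : H n x y = n ! * scaledH n x y := by
  simp only [H, scaledH]
  congr 1
  refine sum_congr rfl fun r _ => ?_
  ring

theorem scaledH_zero (x y : ℝ) : scaledH 0 x y = 1 := by
  simp [scaledH]

theorem scaledH_one (x y : ℝ) : scaledH 1 x y = x := by
  simp [scaledH]

theorem hasDerivAt_scaledH_succ_fst (n : ℕ) (x y : ℝ) :
    HasDerivAt (fun s => scaledH (n + 1) s y) (scaledH n x y) x := by
  have hterm : ∀ r ∈ range ((n + 1) / 2 + 1),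
      HasDerivAt (fun s => y ^ r / (r ! : ℝ) * (s ^ (n + 1 - 2 * r) / ((n + 1 - 2 * r)! : ℝ)))
        (if 2 * r ≤ n then y ^ r / (r ! : ℝ) * (x ^ (n - 2 * r) / ((n - 2 * r)! : ℝ)) else 0) x := by
    intro r _
    split_ifs with hr
    · have h := (hasDerivAt_pow_succ_div_factorial (n - 2 * r) x).const_mul (y ^ r / r !)
      rwa [show n - 2 * r + 1 = n + 1 - 2 * r by omega] at h
    · rw [show n + 1 - 2 * r = 0 by omega]
      simpa using hasDerivAt_const x (y ^ r / r !)
  have hsum := HasDerivAt.fun_sum hterm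
  rwa [← sum_filter, show (range ((n + 1) / 2 + 1)).filter (2 * · ≤ n) = range (n / 2 + 1) by
    ext r; simp only [mem_filter, mem_range]; omega] at hsum

theorem hasDerivAt_scaledH_add_two_snd (n : ℕ) (x y : ℝ) :
    HasDerivAt (fun t => scaledH (n + 2) x t) (scaledH n x y) y := by
  have hsplit : (fun t => scaledH (n + 2) x t) = fun t =>
      (∑ r ∈ range (n / 2 + 1),
          t ^ (r + 1) / ((r + 1)! : ℝ) * (x ^ (n - 2 * r) / ((n - 2 * r)! : ℝ)))
        + x ^ (n + 2) / ((n + 2)! : ℝ) := by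
    funext t
    rw [scaledH, show (n + 2) / 2 + 1 = n / 2 + 1 + 1 by omega, sum_range_succ']
    simp only [show ∀ r, n + 2 - 2 * (r + 1) = n - 2 * r by omega]
    simp
  rw [hsplit]
  refine (HasDerivAt.fun_sum fun r _ => ?_).add_const _
  exact (hasDerivAt_pow_succ_div_factorial r y).mul_const _

theorem H_zero (x y : ℝ) : H 0 x y = 1 := by
  simp [H_eq_factorial_mul_scaledH, scaledH_zero]

theorem H_one (x y : ℝ) : H 1 x y = x := by
  simp [H_eq_factorial_mul_scaledH, scaledH_one]

theorem hasDerivAt_H_succ_fst (n : ℕ) (x y : ℝ) :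
    HasDerivAt (fun s => H (n + 1) s y) ((n + 1) * H n x y) x := by
  simp only [H_eq_factorial_mul_scaledH]
  refine ((hasDerivAt_scaledH_succ_fst n x y).const_mul ((n + 1)! : ℝ)).congr_deriv ?_
  push_cast [factorial_succ]
  ring

theorem hasDerivAt_H_add_two_snd (n : ℕ) (x y : ℝ) :
    HasDerivAt (fun t => H (n + 2) x t) ((n + 2) * (n + 1) * H n x y) y := by
  simp only [H_eq_factorial_mul_scaledH]
  refine ((hasDerivAt_scaledH_add_two_snd n x y).const_mul ((n + 2)! : ℝ)).congr_deriv ?_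
  push_cast [factorial_succ]
  ring

theorem hermite_heat_equation (n : ℕ) (x y : ℝ) :
    deriv (fun t => H n x t) y = deriv (deriv (fun s => H n s y)) x := by
  match n with
  | 0 => simp [H_zero]
  | 1 => simp [H_one]
  | n + 2 =>
    have hx : deriv (fun s => H (n + 2) s y) = fun s => (n + 2) * H (n + 1) s y :=
      funext fun s => by exact_mod_cast (hasDerivAt_H_succ_fst (n + 1) s y).deriv
    rw [(hasDerivAt_H_add_two_snd n x y).deriv, hx,
      ((hasDerivAt_H_succ_fst n x y).const_mul _).deriv]
    ring
end

section
/- For n ≥ 1 and at every point (x,y) where H_n(x,y) ≠ 0, the function u(x,y) = n H_{n-1}(x,y) / H_n(x,y) satisfies the Burgers equation ∂u/∂y = ∂²u/∂x² + 2u ∂u/∂x. -/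
noncomputable def u (n : ℕ) (x y : ℝ) : ℝ := (n : ℝ) * H (n - 1) x y / H n x y

open Topology

/-- `D k` plays the role of `∂ₓᵏ φ` for a solution `φ = D 0` of the heat equation `φ_y = φ_xx`;
the heat equation is required of every `D k` because `u_y` involves the mixed partial `φ_xy`. -/
theorem coleHopf_solves_burgers {D : ℕ → ℝ → ℝ → ℝ}
    (hx : ∀ k s t, HasDerivAt (fun s => D k s t) (D (k + 1) s t) s)
    (hy : ∀ k s t, HasDerivAt (fun t => D k s t) (D (k + 2) s t) t)
    {x y : ℝ} (h : D 0 x y ≠ 0) :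
    deriv (fun t => D 1 x t / D 0 x t) y =
      deriv (deriv fun s => D 1 s y / D 0 s y) x
        + 2 * (D 1 x y / D 0 x y) * deriv (fun s => D 1 s y / D 0 s y) x := by
  have hux : ∀ s, D 0 s y ≠ 0 → HasDerivAt (fun s => D 1 s y / D 0 s y)
      ((D 2 s y * D 0 s y - D 1 s y * D 1 s y) / D 0 s y ^ 2) s :=
    fun s hs => (hx 1 s y).fun_div (hx 0 s y) hs
  have hux_nhds : deriv (fun s => D 1 s y / D 0 s y) =ᶠ[𝓝 x]
      fun s => (D 2 s y * D 0 s y - D 1 s y * D 1 s y) / D 0 s y ^ 2 :=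
    ((hx 0 x y).continuousAt.eventually_ne h).mono fun s hs => (hux s hs).deriv
  have huxx := (((hx 2 x y).fun_mul (hx 0 x y)).fun_sub ((hx 1 x y).fun_mul (hx 1 x y))).fun_div
    ((hx 0 x y).fun_pow 2) (pow_ne_zero 2 h)
  rw [((hy 1 x y).fun_div (hy 0 x y) h).deriv, hux_nhds.deriv_eq, huxx.deriv, (hux x h).deriv]
  field_simp
  ring

noncomputable def hermiteTerm (n r : ℕ) (x y : ℝ) : ℝ :=
  y ^ r * x ^ (n - 2 * r) / ((n - 2 * r).factorial * r.factorial)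

lemma H_eq_sum_hermiteTerm (n : ℕ) (x y : ℝ) :
    H n x y = n.factorial * ∑ r ∈ Finset.range (n / 2 + 1), hermiteTerm n r x y := rfl

lemma hasDerivAt_hermiteTerm_x (n r : ℕ) (x y : ℝ) :
    HasDerivAt (fun s => hermiteTerm (n + 1) r s y)
      (if 2 * r ≤ n then hermiteTerm n r x y else 0) x := by
  unfold hermiteTerm
  split_ifs with hr
  · rw [show n + 1 - 2 * r = n - 2 * r + 1 by omega]
    refine (((hasDerivAt_pow _ x).const_mul (y ^ r)).div_const _).congr_deriv ?_
    rw [Nat.factorial_succ, Nat.add_sub_cancel]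
    push_cast
    field_simp
  · rw [show n + 1 - 2 * r = 0 by omega]
    simpa using hasDerivAt_const x (y ^ r / (r.factorial : ℝ))

lemma hasDerivAt_hermiteTerm_y (n r : ℕ) (x y : ℝ) :
    HasDerivAt (fun t => hermiteTerm (n + 2) (r + 1) x t) (hermiteTerm n r x y) y := by
  unfold hermiteTerm
  rw [show n + 2 - 2 * (r + 1) = n - 2 * r by omega]
  refine (((hasDerivAt_pow (r + 1) y).mul_const (x ^ (n - 2 * r))).div_const _).congr_deriv ?_
  rw [Nat.factorial_succ r]
  push_cast
  field_simp

lemma hasDerivAt_H_x (n : ℕ) (x y : ℝ) :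
    HasDerivAt (fun s => H n s y) (n * H (n - 1) x y) x := by
  rcases n with _ | n
  · simpa [H] using hasDerivAt_const x (1 : ℝ)
  simp only [H_eq_sum_hermiteTerm]
  refine ((HasDerivAt.fun_sum fun r _ => hasDerivAt_hermiteTerm_x n r x y).const_mul
    ((n + 1).factorial : ℝ)).congr_deriv ?_
  have hrange : (Finset.range ((n + 1) / 2 + 1)).filter (fun r => 2 * r ≤ n) =
      Finset.range (n / 2 + 1) := by
    ext r
    simp only [Finset.mem_filter, Finset.mem_range]
    omega
  rw [Finset.sum_ite, Finset.sum_const_zero, add_zero, hrange, Nat.add_sub_cancel,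
    Nat.factorial_succ]
  push_cast
  ring

lemma hasDerivAt_H_y (n : ℕ) (x y : ℝ) :
    HasDerivAt (fun t => H n x t) (n.descFactorial 2 * H (n - 2) x y) y := by
  rcases n with _ | _ | n
  · simpa [H] using hasDerivAt_const y (1 : ℝ)
  · simpa [H] using hasDerivAt_const y x
  simp only [H_eq_sum_hermiteTerm]
  rw [show (n + 2) / 2 + 1 = n / 2 + 1 + 1 by omega]
  simp only [Finset.sum_range_succ' _ (n / 2 + 1)]
  have hconst : HasDerivAt (fun t => hermiteTerm (n + 2) 0 x t) 0 y := by
    simpa [hermiteTerm] using hasDerivAt_const y (x ^ (n + 2) / ((n + 2).factorial : ℝ))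
  refine (((HasDerivAt.fun_sum fun r _ => hasDerivAt_hermiteTerm_y n r x y).fun_add
    hconst).const_mul ((n + 2).factorial : ℝ)).congr_deriv ?_
  simp only [add_zero, Nat.add_sub_cancel, Nat.factorial_succ, Nat.descFactorial_succ,
    Nat.descFactorial_zero]
  push_cast
  ring

noncomputable def hermiteDerivX (n k : ℕ) (x y : ℝ) : ℝ := n.descFactorial k * H (n - k) x y

lemma hasDerivAt_hermiteDerivX_x (n k : ℕ) (x y : ℝ) :
    HasDerivAt (fun s => hermiteDerivX n k s y) (hermiteDerivX n (k + 1) x y) x := by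
  refine ((hasDerivAt_H_x (n - k) x y).const_mul _).congr_deriv ?_
  rw [hermiteDerivX, Nat.descFactorial_succ, Nat.sub_sub]
  push_cast
  ring

lemma hasDerivAt_hermiteDerivX_y (n k : ℕ) (x y : ℝ) :
    HasDerivAt (fun t => hermiteDerivX n k x t) (hermiteDerivX n (k + 2) x y) y := by
  refine ((hasDerivAt_H_y (n - k) x y).const_mul _).congr_deriv ?_
  rw [hermiteDerivX, ← Nat.descFactorial_mul_descFactorial (Nat.le_add_right k 2), Nat.sub_sub,
    Nat.add_sub_cancel_left]
  push_cast
  ring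

theorem hermite_ratio_solves_burgers_general (n : ℕ) (x y : ℝ) (h : H n x y ≠ 0) :
    deriv (fun t => u n x t) y =
      deriv (deriv (fun s => u n s y)) x + 2 * u n x y * deriv (fun s => u n s y) x := by
  have hu : u n = fun s t => hermiteDerivX n 1 s t / hermiteDerivX n 0 s t := by
    funext s t
    simp [u, hermiteDerivX]
  rw [hu]
  exact coleHopf_solves_burgers (hasDerivAt_hermiteDerivX_x n) (hasDerivAt_hermiteDerivX_y n)
    (by simpa [hermiteDerivX] using h)

theorem hermite_ratio_solves_burgers (n : ℕ) (hn : 1 ≤ n) (x y : ℝ) (h : H n x y ≠ 0) :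
    deriv (fun t => u n x t) y =
      deriv (deriv (fun s => u n s y)) x + 2 * u n x y * deriv (fun s => u n s y) x :=
  hermite_ratio_solves_burgers_general n x y h
end

section
/- Let Ψ : ℝ × ℝ → ℝ be sufficiently smooth, nowhere zero on an open set U, and satisfy the third-order heat equation ∂Ψ/∂y = ∂³Ψ/∂x³ on U. Then u = (∂Ψ/∂x)/Ψ satisfies ∂u/∂y = ∂³u/∂x³ + 3u ∂²u/∂x² + 3(∂u/∂x)² + 3u² ∂u/∂x on U. -/
/-!
Write `u = ∂ₓ log Ψ`. Symmetry of the mixed second partials of `log Ψ` gives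
`∂_y u = ∂ₓ (∂_y Ψ / Ψ) = ∂ₓ (∂ₓ³ Ψ / Ψ)`. Since `∂ₓ Ψ = u Ψ`, differentiating `a Ψ` in `x` gives
`((∂ₓ + u) a) Ψ`, so `∂ₓ³ Ψ = ((∂ₓ + u)² u) Ψ` and `∂_y u = ∂ₓ ((∂ₓ + u)² u)`, which expands to
the right-hand side.
-/

open Set Filter Topology Function

section Slices

variable {G : ℝ × ℝ → ℝ} {G' : ℝ × ℝ →L[ℝ] ℝ} {x y : ℝ}

theorem HasFDerivAt.hasDerivAt_slice_fst (h : HasFDerivAt G G' (x, y)) :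
    HasDerivAt (fun s => G (s, y)) (G' (1, 0)) x :=
  h.comp_hasDerivAt x ((hasDerivAt_id x).prodMk (hasDerivAt_const x y))

theorem HasFDerivAt.hasDerivAt_slice_snd (h : HasFDerivAt G G' (x, y)) :
    HasDerivAt (fun t => G (x, t)) (G' (0, 1)) y :=
  h.comp_hasDerivAt y ((hasDerivAt_const y x).prodMk (hasDerivAt_id y))

end Slices

theorem deriv_deriv_comm_of_contDiffAt {F : ℝ → ℝ → ℝ} {x y : ℝ}
    (hF : ContDiffAt ℝ 2 (uncurry F) (x, y)) :
    deriv (fun t => deriv (F · t) x) y = deriv (fun s => deriv (F s ·) y) x := by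
  set G := uncurry F
  have hG : ∀ᶠ p in 𝓝 (x, y), DifferentiableAt ℝ G p :=
    (hF.eventually (by simp)).mono fun p hp => hp.differentiableAt (by simp)
  have hG' : DifferentiableAt ℝ (fderiv ℝ G) (x, y) :=
    (hF.fderiv_right (m := 1) le_rfl).differentiableAt one_ne_zero
  have hpartial (v : ℝ × ℝ) :
      HasFDerivAt (fun p => fderiv ℝ G p v) ((fderiv ℝ (fderiv ℝ G) (x, y)).flip v) (x, y) := by
    simpa using hG'.hasFDerivAt.clm_apply (hasFDerivAt_const v (x, y))
  have hfst : (fun t => deriv (F · t) x) =ᶠ[𝓝 y] fun t => fderiv ℝ G (x, t) (1, 0) :=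
    ((continuous_const.prodMk continuous_id).tendsto y).eventually hG |>.mono
      fun t ht => ht.hasFDerivAt.hasDerivAt_slice_fst.deriv
  have hsnd : (fun s => deriv (F s ·) y) =ᶠ[𝓝 x] fun s => fderiv ℝ G (s, y) (0, 1) :=
    ((continuous_id.prodMk continuous_const).tendsto x).eventually hG |>.mono
      fun s hs => hs.hasFDerivAt.hasDerivAt_slice_snd.deriv
  rw [hfst.deriv_eq, hsnd.deriv_eq, (hpartial _).hasDerivAt_slice_snd.deriv,
    (hpartial _).hasDerivAt_slice_fst.deriv]
  exact (hF.isSymmSndFDerivAt (by simp)) _ _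

theorem deriv_logDeriv_comm {Ψ : ℝ → ℝ → ℝ} {x y : ℝ}
    (hΨ : ContDiffAt ℝ 2 (uncurry Ψ) (x, y)) (hne : Ψ x y ≠ 0) :
    deriv (fun t => logDeriv (Ψ · t) x) y = deriv (fun s => logDeriv (Ψ s ·) y) x := by
  have hlog : ∀ᶠ p in 𝓝 (x, y),
      deriv (fun s => Real.log (Ψ s p.2)) p.1 = logDeriv (Ψ · p.2) p.1 ∧
        deriv (fun t => Real.log (Ψ p.1 t)) p.2 = logDeriv (Ψ p.1 ·) p.2 := by
    filter_upwards [(hΨ.eventually (by simp)), hΨ.continuousAt.eventually_ne hne]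
      with ⟨s, t⟩ hd hne'
    have hd := (hd.differentiableAt (by simp)).hasFDerivAt
    exact ⟨deriv.log hd.hasDerivAt_slice_fst.differentiableAt hne',
      deriv.log hd.hasDerivAt_slice_snd.differentiableAt hne'⟩
  have hfst : (fun t => logDeriv (Ψ · t) x) =ᶠ[𝓝 y]
      fun t => deriv (fun s => Real.log (Ψ s t)) x :=
    ((continuous_const.prodMk continuous_id).tendsto y).eventually hlog |>.mono
      fun t ht => ht.1.symm
  have hsnd : (fun s => logDeriv (Ψ s ·) y) =ᶠ[𝓝 x]
      fun s => deriv (fun t => Real.log (Ψ s t)) y :=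
    ((continuous_id.prodMk continuous_const).tendsto x).eventually hlog |>.mono
      fun s hs => hs.2.symm
  rw [hfst.deriv_eq, hsnd.deriv_eq]
  exact deriv_deriv_comm_of_contDiffAt (F := fun s t => Real.log (Ψ s t)) (hΨ.log hne)

noncomputable def twistedDeriv (q a : ℝ → ℝ) : ℝ → ℝ := fun s => deriv a s + q s * a s

section TwistedDeriv

variable {V : Set ℝ} {q a g : ℝ → ℝ}

theorem ContDiffOn.twistedDeriv {n : ℕ} (hV : IsOpen V) (ha : ContDiffOn ℝ (n + 1) a V)
    (hq : ContDiffOn ℝ n q V) : ContDiffOn ℝ n (twistedDeriv q a) V :=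
  (ha.deriv_of_isOpen hV le_rfl).add (hq.mul (ha.of_le (by norm_cast; omega)))

theorem ContDiffOn.logDeriv {n : ℕ} (hV : IsOpen V) (hg : ContDiffOn ℝ (n + 1) g V)
    (hne : ∀ s ∈ V, g s ≠ 0) : ContDiffOn ℝ n (logDeriv g) V :=
  (hg.deriv_of_isOpen hV le_rfl).div (hg.of_le (by norm_cast; omega)) hne

theorem eqOn_deriv_of_eqOn_mul {f : ℝ → ℝ} (hV : IsOpen V) (hf : EqOn f (a * g) V)
    (ha : DifferentiableOn ℝ a V) (hg : DifferentiableOn ℝ g V)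
    (hgq : EqOn (deriv g) (q * g) V) :
    EqOn (deriv f) (twistedDeriv q a * g) V := by
  intro s hs
  have hfs : f =ᶠ[𝓝 s] a * g := eventuallyEq_of_mem (hV.mem_nhds hs) hf
  rw [hfs.deriv_eq, deriv_mul ((ha s hs).differentiableAt (hV.mem_nhds hs))
    ((hg s hs).differentiableAt (hV.mem_nhds hs)), hgq hs]
  simp only [twistedDeriv, Pi.mul_apply]
  ring

theorem eqOn_deriv_deriv_deriv_twistedDeriv_mul (hV : IsOpen V) (hg : ContDiffOn ℝ 3 g V)
    (hne : ∀ s ∈ V, g s ≠ 0) :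
    EqOn (deriv (deriv (deriv g)))
      (twistedDeriv (logDeriv g) (twistedDeriv (logDeriv g) (logDeriv g)) * g) V := by
  have hq : ContDiffOn ℝ 2 (logDeriv g) V := hg.logDeriv hV hne
  have hg1 : DifferentiableOn ℝ g V := hg.differentiableOn (by norm_num)
  have hd1 : EqOn (deriv g) (logDeriv g * g) V := fun s hs => by
    simp [logDeriv_apply, hne s hs]
  have hd2 := eqOn_deriv_of_eqOn_mul hV hd1 (hq.differentiableOn (by norm_num)) hg1 hd1
  exact eqOn_deriv_of_eqOn_mul hV hd2
    ((ContDiffOn.twistedDeriv (n := 1) hV hq (hq.of_le (by norm_num))).differentiableOn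
      (by norm_num)) hg1 hd1

theorem deriv_twistedDeriv_twistedDeriv_self {x : ℝ} (hV : IsOpen V) (hq : ContDiffOn ℝ 3 q V)
    (hx : x ∈ V) :
    deriv (twistedDeriv q (twistedDeriv q q)) x =
      deriv (deriv (deriv q)) x + 3 * q x * deriv (deriv q) x + 3 * deriv q x ^ 2
        + 3 * q x ^ 2 * deriv q x := by
  have hq1 : ContDiffOn ℝ 2 (deriv q) V := hq.deriv_of_isOpen hV le_rfl
  have hq2 : ContDiffOn ℝ 1 (deriv (deriv q)) V := hq1.deriv_of_isOpen hV le_rfl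
  have d0 : ∀ s ∈ V, HasDerivAt q (deriv q s) s := fun s hs =>
    ((hq.differentiableOn (by norm_num)).differentiableAt (hV.mem_nhds hs)).hasDerivAt
  have d1 : ∀ s ∈ V, HasDerivAt (deriv q) (deriv (deriv q) s) s := fun s hs =>
    ((hq1.differentiableOn (by norm_num)).differentiableAt (hV.mem_nhds hs)).hasDerivAt
  have d2 : HasDerivAt (deriv (deriv q)) (deriv (deriv (deriv q)) x) x :=
    ((hq2.differentiableOn one_ne_zero).differentiableAt (hV.mem_nhds hx)).hasDerivAt
  have hexpand : twistedDeriv q (twistedDeriv q q) =ᶠ[𝓝 x]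
      fun s => deriv (deriv q) s + 3 * q s * deriv q s + q s ^ 3 := by
    filter_upwards [hV.mem_nhds hx] with s hs
    have h : HasDerivAt (twistedDeriv q q) (deriv (deriv q) s + 2 * q s * deriv q s) s :=
      ((d1 s hs).add ((d0 s hs).mul (d0 s hs))).congr_deriv (by ring)
    rw [twistedDeriv, h.deriv, twistedDeriv]
    ring
  have h : HasDerivAt (fun s => deriv (deriv q) s + 3 * q s * deriv q s + q s ^ 3)
      (deriv (deriv (deriv q)) x + 3 * q x * deriv (deriv q) x + 3 * deriv q x ^ 2
        + 3 * q x ^ 2 * deriv q x) x :=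
    ((d2.add (((d0 x hx).const_mul 3).mul (d1 x hx))).add ((d0 x hx).pow 3)).congr_deriv
      (by ring)
  exact hexpand.deriv_eq.trans h.deriv

end TwistedDeriv

theorem hopf_cole_third_order (Ψ : ℝ → ℝ → ℝ) (U : Set (ℝ × ℝ)) (hU : IsOpen U)
    (hΨ : ContDiffOn ℝ 4 (fun p : ℝ × ℝ => Ψ p.1 p.2) U)
    (hne : ∀ x y : ℝ, (x, y) ∈ U → Ψ x y ≠ 0)
    (heat : ∀ x y : ℝ, (x, y) ∈ U →
      deriv (fun t => Ψ x t) y = deriv (deriv (deriv (fun s => Ψ s y))) x)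
    (u : ℝ → ℝ → ℝ)
    (hu : ∀ x y : ℝ, u x y = deriv (fun s => Ψ s y) x / Ψ x y) :
    ∀ x y : ℝ, (x, y) ∈ U →
      deriv (fun t => u x t) y =
        deriv (deriv (deriv (fun s => u s y))) x
          + 3 * u x y * deriv (deriv (fun s => u s y)) x
          + 3 * (deriv (fun s => u s y) x) ^ 2
          + 3 * (u x y) ^ 2 * deriv (fun s => u s y) x := by
  intro x y hxy
  set V := {s | (s, y) ∈ U}
  have hV : IsOpen V := hU.preimage (continuous_id.prodMk continuous_const)
  have hg : ContDiffOn ℝ 4 (Ψ · y) V :=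
    hΨ.comp (contDiff_prodMk_left y).contDiffOn fun _ hs => hs
  have hu_slice : (fun s => u s y) = logDeriv (Ψ · y) := funext fun s => hu s y
  have hq : ContDiffOn ℝ 3 (logDeriv (Ψ · y)) V := hg.logDeriv hV fun s hs => hne s y hs
  have hheat : (fun s => logDeriv (Ψ s ·) y) =ᶠ[𝓝 x]
      twistedDeriv (logDeriv (Ψ · y)) (twistedDeriv (logDeriv (Ψ · y)) (logDeriv (Ψ · y))) := by
    filter_upwards [hV.mem_nhds hxy] with s hs
    rw [logDeriv_apply, heat s y hs, eqOn_deriv_deriv_deriv_twistedDeriv_mul hV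
      (hg.of_le (by norm_num)) (fun s hs => hne s y hs) hs, Pi.mul_apply,
      mul_div_cancel_right₀ _ (hne s y hs)]
  calc deriv (fun t => u x t) y = deriv (fun t => logDeriv (Ψ · t) x) y := by
        simp only [hu, logDeriv_apply]
    _ = deriv (fun s => logDeriv (Ψ s ·) y) x := deriv_logDeriv_comm
        ((hΨ.contDiffAt (hU.mem_nhds hxy)).of_le (by norm_num)) (hne x y hxy)
    _ = _ := by
        rw [hheat.deriv_eq, deriv_twistedDeriv_twistedDeriv_self hV hq hxy, hu_slice, hu,
          logDeriv_apply]
end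

section
/- For each natural number n and each m ≥ 1, the lacunary m-th order Hermite polynomial H_n^{(m)}(x,y) = n! * ∑_{r=0}^{⌊n/m⌋} y^r x^(n-mr) / ((n-mr)! r!) satisfies the higher-order heat equation ∂H_n^{(m)}/∂y = ∂^m H_n^{(m)}/∂x^m for all real x, y. -/
/-!
With `e_k(z) = z^k / k!` (`powDivFactorial k`) we have
`H_n^{(m)}(x, y) = n! ∑_{r ≤ ⌊n/m⌋} e_r(y) e_{n-mr}(x)`, and differentiation sends `e_k` to
`e_{k-1}` and `e_0` to `0`. So `∂/∂y` drops the term `r = 0` and shifts `r` down by one, while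
`∂^m/∂x^m` turns `e_{n-mr}` into `e_{n-m(r+1)}` and drops exactly the terms with `n - mr < m`,
i.e. the term `r = ⌊n/m⌋`. Both sides become `n! ∑_{r < ⌊n/m⌋} e_r(y) e_{n-m(r+1)}(x)`.
-/

/-- Lacunary m-th order Hermite polynomials. -/
noncomputable def Hm (m n : ℕ) (x y : ℝ) : ℝ :=
  (n.factorial : ℝ) * ∑ r ∈ Finset.range (n / m + 1),
    y ^ r * x ^ (n - m * r) / (((n - m * r).factorial : ℝ) * (r.factorial : ℝ))

open Finset

section

variable {𝕜 : Type*} [NontriviallyNormedField 𝕜]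

noncomputable def powDivFactorial (k : ℕ) (x : 𝕜) : 𝕜 := x ^ k / k.factorial

theorem contDiff_powDivFactorial (k : ℕ) {n : WithTop ℕ∞} :
    ContDiff 𝕜 n (powDivFactorial k : 𝕜 → 𝕜) := by
  unfold powDivFactorial; fun_prop

theorem iteratedDeriv_powDivFactorial [CharZero 𝕜] (j k : ℕ) (x : 𝕜) :
    iteratedDeriv j (powDivFactorial k) x = if j ≤ k then powDivFactorial (k - j) x else 0 := by
  change iteratedDeriv j (fun z : 𝕜 => z ^ k / k.factorial) x = _
  rw [iteratedDeriv_div_const, iteratedDeriv_pow]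
  split_ifs with hjk
  · have hne : (k.descFactorial j : 𝕜) ≠ 0 :=
      Nat.cast_ne_zero.mpr (Nat.descFactorial_pos.mpr hjk).ne'
    rw [powDivFactorial, ← Nat.factorial_mul_descFactorial hjk, Nat.cast_mul, mul_comm,
      mul_div_mul_right _ _ hne]
  · simp [Nat.descFactorial_eq_zero_iff_lt.mpr (not_le.mp hjk)]

theorem iteratedDeriv_sum_mul_powDivFactorial [CharZero 𝕜] {ι : Type*} (s : Finset ι)
    (c : ι → 𝕜) (k : ι → ℕ) (j : ℕ) (x : 𝕜) :
    iteratedDeriv j (fun z => ∑ i ∈ s, c i * powDivFactorial (k i) z) x =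
      ∑ i ∈ s, c i * if j ≤ k i then powDivFactorial (k i - j) x else 0 := by
  rw [iteratedDeriv_fun_sum fun i _ =>
    contDiffAt_const.mul (contDiff_powDivFactorial (k i)).contDiffAt]
  simp only [iteratedDeriv_const_mul_field, iteratedDeriv_powDivFactorial]

end

theorem Hm_eq_sum (m n : ℕ) (x y : ℝ) :
    Hm m n x y = ∑ r ∈ range (n / m + 1),
      (n.factorial * powDivFactorial r y) * powDivFactorial (n - m * r) x := by
  rw [Hm, mul_sum]
  refine sum_congr rfl fun r _ => ?_
  simp only [powDivFactorial]
  ring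

theorem le_sub_mul_iff_lt_div {m n r : ℕ} (hm : 0 < m) : m ≤ n - m * r ↔ r < n / m := by
  rw [← Nat.succ_le_iff, Nat.le_div_iff_mul_le hm, Nat.succ_mul, mul_comm r]
  omega

theorem higher_order_heat_equation (m n : ℕ) (hm : 1 ≤ m) (x y : ℝ) :
    deriv (fun t => Hm m n x t) y = (deriv^[m]) (fun s => Hm m n s y) x := by
  have hy : (fun t => Hm m n x t) = fun t => ∑ r ∈ range (n / m + 1),
      (n.factorial * powDivFactorial (n - m * r) x) * powDivFactorial r t := by
    funext t; rw [Hm_eq_sum]; exact sum_congr rfl fun r _ => by ring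
  have hx : (fun s => Hm m n s y) = fun s => ∑ r ∈ range (n / m + 1),
      (n.factorial * powDivFactorial r y) * powDivFactorial (n - m * r) s := by
    funext s; exact Hm_eq_sum m n s y
  rw [← iteratedDeriv_one, ← iteratedDeriv_eq_iterate, hy, hx,
    iteratedDeriv_sum_mul_powDivFactorial, iteratedDeriv_sum_mul_powDivFactorial,
    sum_range_succ', sum_range_succ, if_neg (by omega),
    if_neg ((le_sub_mul_iff_lt_div hm).not.mpr (lt_irrefl _)), mul_zero, mul_zero, add_zero,
    add_zero]
  refine sum_congr rfl fun r hr => ?_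
  rw [if_pos (by omega), if_pos ((le_sub_mul_iff_lt_div hm).mpr (mem_range.mp hr)),
    Nat.add_sub_cancel, mul_add_one, Nat.sub_sub]
  ring
end

section
/- For each natural number n, the two-variable Laguerre polynomial L_n(x,t) = n! * ∑_{r=0}^{n} t^(n-r) x^r / ((n-r)! (r!)²) satisfies the Laguerre diffusion equation ∂L_n/∂t = ∂/∂x ( x ∂L_n/∂x ) for all real x, t. -/
/-!
Write `L n = n! * ∑_{j + k = n} m j k` with `m j k x t = x ^ j t ^ k / ((j!)² k!)` (`laguerreMonomial`). Then
`∂ₜ m j (k + 1) = m j k` and `∂ₓ (x ∂ₓ m (j + 1) k) = m j k`, while `m j 0` is constant in `t`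
and `m 0 k` constant in `x`. Hence both sides of the equation equal `n! * ∑_{j + k = n - 1} m j k`,
that is `n * L (n - 1)`.
-/

/-- Two-variable Laguerre polynomials. -/
noncomputable def L (n : ℕ) (x t : ℝ) : ℝ :=
  (n.factorial : ℝ) * ∑ r ∈ Finset.range (n + 1),
    t ^ (n - r) * x ^ r / (((n - r).factorial : ℝ) * ((r.factorial : ℝ)) ^ 2)

open Finset Nat

noncomputable def laguerreMonomial (j k : ℕ) (x t : ℝ) : ℝ :=
  x ^ j * t ^ k / ((j ! : ℝ) ^ 2 * k !)

section laguerreMonomial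

variable (j k : ℕ) (x t : ℝ)

theorem hasDerivAt_laguerreMonomial_succ_time :
    HasDerivAt (fun s => laguerreMonomial j (k + 1) x s) (laguerreMonomial j k x t) t := by
  refine (((hasDerivAt_pow (k + 1) t).const_mul (x ^ j)).div_const
    ((j ! : ℝ) ^ 2 * (k + 1)!)).congr_deriv ?_
  simp only [laguerreMonomial, factorial_succ]
  push_cast
  field_simp

theorem hasDerivAt_laguerreMonomial_zero_time :
    HasDerivAt (fun s => laguerreMonomial j 0 x s) 0 t := by
  simpa [laguerreMonomial] using hasDerivAt_const t (x ^ j / (j ! : ℝ) ^ 2)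

theorem hasDerivAt_laguerreMonomial_succ_space :
    HasDerivAt (fun y => laguerreMonomial (j + 1) k y t) (laguerreMonomial j k x t / (j + 1)) x := by
  refine (((hasDerivAt_pow (j + 1) x).mul_const (t ^ k)).div_const
    (((j + 1)! : ℝ) ^ 2 * k !)).congr_deriv ?_
  simp only [laguerreMonomial, factorial_succ]
  push_cast
  field_simp

theorem hasDerivAt_laguerreMonomial_zero_space :
    HasDerivAt (fun y => laguerreMonomial 0 k y t) 0 x := by
  simpa [laguerreMonomial] using hasDerivAt_const x (t ^ k / (k ! : ℝ))

-- `x ∂ₓ` acts on `m (j + 1) k` as multiplication by `j + 1`.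
theorem mul_laguerreMonomial_div_succ :
    x * (laguerreMonomial j k x t / (j + 1)) = (j + 1) * laguerreMonomial (j + 1) k x t := by
  simp only [laguerreMonomial, factorial_succ]
  push_cast
  field_simp
  ring

end laguerreMonomial

theorem L_eq_sum_antidiagonal (n : ℕ) (x t : ℝ) :
    L n x t = n ! * ∑ p ∈ antidiagonal n, laguerreMonomial p.1 p.2 x t := by
  rw [Nat.sum_antidiagonal_eq_sum_range_succ (fun j k => laguerreMonomial j k x t), L]
  congr 1
  refine sum_congr rfl fun r _ => ?_
  simp only [laguerreMonomial]
  ring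

theorem hasDerivAt_L_succ_time (n : ℕ) (x t : ℝ) :
    HasDerivAt (fun s => L (n + 1) x s) ((n + 1) * L n x t) t := by
  simp only [L_eq_sum_antidiagonal, Nat.sum_antidiagonal_succ']
  have hsum := HasDerivAt.fun_sum (u := antidiagonal n) fun p _ =>
    hasDerivAt_laguerreMonomial_succ_time p.1 p.2 x t
  refine (((hasDerivAt_laguerreMonomial_zero_time (n + 1) x t).add hsum).const_mul
    ((n + 1)! : ℝ)).congr_deriv ?_
  rw [zero_add, factorial_succ]
  push_cast
  ring

theorem hasDerivAt_L_succ_space (n : ℕ) (x t : ℝ) :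
    HasDerivAt (fun y => L (n + 1) y t)
      ((n + 1)! * ∑ p ∈ antidiagonal n, laguerreMonomial p.1 p.2 x t / (p.1 + 1)) x := by
  simp only [L_eq_sum_antidiagonal, Nat.sum_antidiagonal_succ]
  have hsum := HasDerivAt.fun_sum (u := antidiagonal n) fun p _ =>
    hasDerivAt_laguerreMonomial_succ_space p.1 p.2 x t
  refine (((hasDerivAt_laguerreMonomial_zero_space (n + 1) x t).add hsum).const_mul
    ((n + 1)! : ℝ)).congr_deriv ?_
  rw [zero_add]

theorem mul_deriv_L_succ_space (n : ℕ) (t : ℝ) :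
    (fun s => s * deriv (fun y => L (n + 1) y t) s) = fun s =>
      (n + 1)! * ∑ p ∈ antidiagonal n, (p.1 + 1) * laguerreMonomial (p.1 + 1) p.2 s t := by
  funext s
  rw [(hasDerivAt_L_succ_space n s t).deriv, mul_left_comm, mul_sum]
  simp only [mul_laguerreMonomial_div_succ]

theorem hasDerivAt_mul_deriv_L_succ_space (n : ℕ) (x t : ℝ) :
    HasDerivAt (fun s => s * deriv (fun y => L (n + 1) y t) s) ((n + 1) * L n x t) x := by
  rw [mul_deriv_L_succ_space]
  have hsum := HasDerivAt.fun_sum (u := antidiagonal n) fun p _ =>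
    (hasDerivAt_laguerreMonomial_succ_space p.1 p.2 x t).const_mul ((p.1 : ℝ) + 1)
  refine (hsum.const_mul ((n + 1)! : ℝ)).congr_deriv ?_
  rw [L_eq_sum_antidiagonal, factorial_succ]
  push_cast
  rw [← mul_assoc]
  congr 1
  refine sum_congr rfl fun p _ => ?_
  field_simp

theorem laguerre_diffusion (n : ℕ) (x t : ℝ) :
    deriv (fun s => L n x s) t =
      deriv (fun s => s * deriv (fun s' => L n s' t) s) x := by
  cases n with
  | zero => simp [L]
  | succ n =>
    rw [(hasDerivAt_L_succ_time n x t).deriv, (hasDerivAt_mul_deriv_L_succ_space n x t).deriv]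
end

section
/- For each natural number n, the hybrid polynomial ₂𝓛_n(x,y) = n! * ∑_{r=0}^{⌊n/2⌋} y^r x^(n-2r) / ((n-2r)! (r!)²) satisfies the PDE ∂/∂y( y ∂Ψ/∂y ) = ∂²Ψ/∂x², i.e., ∂Ψ/∂y + y ∂²Ψ/∂y² = ∂²Ψ/∂x², for all real x, y, together with the initial condition ₂𝓛_n(x,0) = x^n. -/
/-- Hybrid Hermite–Laguerre polynomials ₂𝓛ₙ. -/
noncomputable def hybridL (n : ℕ) (x y : ℝ) : ℝ :=
  (n.factorial : ℝ) * ∑ r ∈ Finset.range (n / 2 + 1),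
    y ^ r * x ^ (n - 2 * r) / (((n - 2 * r).factorial : ℝ) * ((r.factorial : ℝ)) ^ 2)

/-!
The operator `∂_y (y ∂_y)` sends `y ^ r` to `r² y ^ (r - 1)` and `∂_x²` sends `x ^ m` to
`m (m - 1) x ^ (m - 2)`. Applied to `∑ c_r y^r x^(n-2r)`, both operators produce the monomials
`y ^ r x ^ (n - 2r - 2)`, and the coefficients agree because
`c_{r+1} (r+1)² = c_r (n-2r)(n-2r-1)` for `c_r = n! / ((n-2r)! (r!)²)`.
-/

open Finset

section SumMulPow

variable {ι : Type*} (s : Finset ι) (a : ι → ℝ) (e : ι → ℕ)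

theorem deriv_sum_mul_pow :
    deriv (fun t : ℝ => ∑ i ∈ s, a i * t ^ e i) = fun t => ∑ i ∈ s, a i * e i * t ^ (e i - 1) :=
  funext fun t => (HasDerivAt.fun_sum fun i _ => (hasDerivAt_pow (e i) t).const_mul (a i)).deriv.trans
    (sum_congr rfl fun i _ => by ring)

theorem deriv_deriv_sum_mul_pow :
    deriv (deriv (fun t : ℝ => ∑ i ∈ s, a i * t ^ e i)) =
      fun t => ∑ i ∈ s, a i * ((e i * (e i - 1) : ℕ) : ℝ) * t ^ (e i - 2) := by
  rw [deriv_sum_mul_pow, deriv_sum_mul_pow s (fun i => a i * e i) (fun i => e i - 1)]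
  funext t
  refine sum_congr rfl fun i _ => ?_
  rw [Nat.sub_sub, Nat.cast_mul]
  ring

theorem mul_pow_pred_add_mul_mul_pow_sub_two (y : ℝ) (r : ℕ) :
    (r : ℝ) * y ^ (r - 1) + y * (((r * (r - 1) : ℕ) : ℝ) * y ^ (r - 2)) = (r : ℝ) ^ 2 * y ^ (r - 1) := by
  match r with
  | 0 => simp
  | 1 => simp
  | r + 2 =>
    simp only [Nat.add_sub_cancel, show r + 2 - 1 = r + 1 from rfl]
    push_cast
    ring

theorem deriv_add_mul_deriv_deriv_sum_mul_pow (y : ℝ) :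
    deriv (fun t : ℝ => ∑ i ∈ s, a i * t ^ e i) y +
        y * deriv (deriv (fun t : ℝ => ∑ i ∈ s, a i * t ^ e i)) y =
      ∑ i ∈ s, a i * (e i : ℝ) ^ 2 * y ^ (e i - 1) := by
  rw [deriv_deriv_sum_mul_pow, deriv_sum_mul_pow, mul_sum, ← sum_add_distrib]
  refine sum_congr rfl fun i _ => ?_
  rw [mul_assoc, mul_assoc, mul_left_comm y, ← mul_add, mul_pow_pred_add_mul_mul_pow_sub_two,
    mul_assoc]

end SumMulPow

noncomputable def hybridCoeff (n r : ℕ) : ℝ :=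
  n.factorial / ((n - 2 * r).factorial * (r.factorial : ℝ) ^ 2)

theorem hybridL_eq_sum (n : ℕ) (x y : ℝ) :
    hybridL n x y = ∑ r ∈ range (n / 2 + 1), hybridCoeff n r * y ^ r * x ^ (n - 2 * r) := by
  rw [hybridL, mul_sum]
  exact sum_congr rfl fun r _ => by rw [hybridCoeff]; ring

theorem hybridL_zero_right (n : ℕ) (x : ℝ) : hybridL n x 0 = x ^ n := by
  rw [hybridL_eq_sum, sum_eq_single_of_mem 0 (mem_range.mpr (Nat.succ_pos _))]
  · simp [hybridCoeff, Nat.factorial_ne_zero]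
  · intro r _ hr
    simp [zero_pow hr]

theorem hybridCoeff_succ_mul_sq {n r : ℕ} (h : 2 * r + 2 ≤ n) :
    hybridCoeff n (r + 1) * ((r + 1 : ℕ) : ℝ) ^ 2 =
      hybridCoeff n r * (((n - 2 * r) * (n - 2 * r - 1) : ℕ) : ℝ) := by
  obtain ⟨m, rfl⟩ := Nat.exists_eq_add_of_le h
  have hr : 2 * r + 2 + m - 2 * r = m + 2 := by omega
  have hr1 : 2 * r + 2 + m - 2 * (r + 1) = m := by omega
  simp only [hybridCoeff, hr, hr1, Nat.factorial_succ]
  push_cast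
  field_simp
  ring

theorem sum_hybridCoeff_mul_sq_eq (n : ℕ) (x y : ℝ) :
    ∑ r ∈ range (n / 2 + 1), hybridCoeff n r * x ^ (n - 2 * r) * (r : ℝ) ^ 2 * y ^ (r - 1) =
      ∑ r ∈ range (n / 2 + 1), hybridCoeff n r * y ^ r *
        (((n - 2 * r) * (n - 2 * r - 1) : ℕ) : ℝ) * x ^ (n - 2 * r - 2) := by
  -- The `r = 0` term on the left and the `r = n / 2` term on the right vanish; shift the rest.
  have htop : (n - 2 * (n / 2)) * (n - 2 * (n / 2) - 1) = 0 := by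
    rcases (by omega : n - 2 * (n / 2) = 0 ∨ n - 2 * (n / 2) = 1) with h | h <;> simp [h]
  rw [sum_range_succ', sum_range_succ, htop]
  simp only [Nat.cast_zero, zero_pow two_ne_zero, mul_zero, zero_mul, add_zero]
  refine sum_congr rfl fun r hr => ?_
  have h : 2 * r + 2 ≤ n := by have := mem_range.mp hr; omega
  rw [show n - 2 * (r + 1) = n - 2 * r - 2 by omega, Nat.add_sub_cancel]
  linear_combination x ^ (n - 2 * r - 2) * y ^ r * hybridCoeff_succ_mul_sq h

theorem hybrid_pde (n : ℕ) :
    (∀ x y : ℝ,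
      deriv (fun t => hybridL n x t) y + y * deriv (deriv (fun t => hybridL n x t)) y =
        deriv (deriv (fun s => hybridL n s y)) x) ∧
    (∀ x : ℝ, hybridL n x 0 = x ^ n) := by
  refine ⟨fun x y => ?_, hybridL_zero_right n⟩
  have hy : (fun t => hybridL n x t) =
      fun t => ∑ r ∈ range (n / 2 + 1), hybridCoeff n r * x ^ (n - 2 * r) * t ^ r :=
    funext fun t => (hybridL_eq_sum n x t).trans (sum_congr rfl fun r _ => by ring)
  have hx : (fun s => hybridL n s y) =
      fun s => ∑ r ∈ range (n / 2 + 1), hybridCoeff n r * y ^ r * s ^ (n - 2 * r) :=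
    funext fun s => hybridL_eq_sum n s y
  rw [hy, hx, deriv_add_mul_deriv_deriv_sum_mul_pow, deriv_deriv_sum_mul_pow]
  exact sum_hybridCoeff_mul_sq_eq n x y
end

section
/- Let α, β, γ be real constants and n ≥ 1. The function Ψ(x,y) = H_n(x + αy, βy, γy), where H_n(x₁,x₂,x₃) is the three-variable Hermite polynomial, satisfies ∂Ψ/∂y = α ∂Ψ/∂x + β ∂²Ψ/∂x² + γ ∂³Ψ/∂x³ with Ψ(x,0) = x^n. -/
/-
With falling factorials, `H_n(x₁,x₂,x₃) = ∑ n^{(3r+2s)}/(s! r!) · x₃^r x₂^s x₁^(n-3r-2s)`, and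
`n^{(3r+2s)}` vanishes as soon as `3r+2s > n`, so the sum may run over any large enough box of
indices. Differentiating term by term and shifting `s` or `r` by one gives the Appell relations
`∂₁H_n = n H_{n-1}`, `∂₂H_n = n^{(2)} H_{n-2}`, `∂₃H_n = n^{(3)} H_{n-3}`. Hence
`∂ₓʲΨ = n^{(j)} H_{n-j}(x+αy, βy, γy)`, while the chain rule gives
`∂_yΨ = α ∂₁H_n + β ∂₂H_n + γ ∂₃H_n`.
-/

/-- Three-variable Hermite polynomials
`H_n(x₁,x₂,x₃) = n! ∑_{3r+2s+k=n} x₁^k x₂^s x₃^r / (k! s! r!)`. -/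
noncomputable def H3v (n : ℕ) (x₁ x₂ x₃ : ℝ) : ℝ :=
  (n.factorial : ℝ) * ∑ r ∈ Finset.range (n / 3 + 1),
    ∑ s ∈ Finset.range ((n - 3 * r) / 2 + 1),
      x₃ ^ r * x₂ ^ s * x₁ ^ (n - 3 * r - 2 * s) /
        (((n - 3 * r - 2 * s).factorial : ℝ) * (s.factorial : ℝ) * (r.factorial : ℝ))

open Finset Nat

theorem Nat.descFactorial_add (n j m : ℕ) :
    n.descFactorial (j + m) = n.descFactorial j * (n - j).descFactorial m := by
  rw [← Nat.descFactorial_mul_descFactorial (Nat.le_add_right j m), Nat.add_sub_cancel_left,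
    Nat.mul_comm]

namespace H3v

noncomputable def coeff (n r s : ℕ) : ℝ :=
  n.descFactorial (3 * r + 2 * s) / (s ! * r ! : ℝ)

theorem coeff_eq_zero {n r s : ℕ} (h : n < 3 * r + 2 * s) : coeff n r s = 0 := by
  simp [coeff, Nat.descFactorial_eq_zero_iff_lt.mpr h]

theorem coeff_mul_sub (n r s : ℕ) :
    coeff n r s * (n - 3 * r - 2 * s : ℕ) = n * coeff (n - 1) r s := by
  have key : n.descFactorial (3 * r + 2 * s) * (n - 3 * r - 2 * s) =
      n * (n - 1).descFactorial (3 * r + 2 * s) := by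
    rw [Nat.mul_comm, Nat.sub_sub, ← Nat.descFactorial_succ, ← Nat.add_comm 1,
      Nat.descFactorial_add, Nat.descFactorial_one]
  simp only [coeff]
  rw [div_mul_eq_mul_div, ← Nat.cast_mul, key]
  push_cast
  ring

theorem coeff_succ_right_mul (n r s : ℕ) :
    coeff n r (s + 1) * (s + 1 : ℕ) = n.descFactorial 2 * coeff (n - 2) r s := by
  have key : n.descFactorial (3 * r + 2 * (s + 1)) =
      n.descFactorial 2 * (n - 2).descFactorial (3 * r + 2 * s) := by
    rw [← Nat.descFactorial_add]; ring_nf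
  simp only [coeff, key, Nat.factorial_succ]
  push_cast
  field_simp

theorem coeff_succ_left_mul (n r s : ℕ) :
    coeff n (r + 1) s * (r + 1 : ℕ) = n.descFactorial 3 * coeff (n - 3) r s := by
  have key : n.descFactorial (3 * (r + 1) + 2 * s) =
      n.descFactorial 3 * (n - 3).descFactorial (3 * r + 2 * s) := by
    rw [← Nat.descFactorial_add]; ring_nf
  simp only [coeff, key, Nat.factorial_succ]
  push_cast
  field_simp

theorem eq_sum {n R S : ℕ} (hR : n < R) (hS : n < S) (u v w : ℝ) :
    H3v n u v w = ∑ r ∈ range R, ∑ s ∈ range S,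
      coeff n r s * (w ^ r * v ^ s * u ^ (n - 3 * r - 2 * s)) := by
  have outside : ∀ r s, n < 3 * r + 2 * s →
      coeff n r s * (w ^ r * v ^ s * u ^ (n - 3 * r - 2 * s)) = 0 := fun r s h => by
    simp [coeff_eq_zero h]
  rw [H3v, mul_sum, eq_comm, eventually_constant_sum (N := n / 3 + 1) ?_ (by omega)]
  · refine sum_congr rfl fun r hr => ?_
    rw [mul_sum, eventually_constant_sum (N := (n - 3 * r) / 2 + 1) ?_ (by omega)]
    · refine sum_congr rfl fun s hs => Eq.symm ?_
      have hle : 3 * r + 2 * s ≤ n := by simp only [mem_range] at hr hs; omega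
      rw [← Nat.factorial_mul_descFactorial hle, coeff, Nat.sub_sub]
      push_cast
      field_simp
    · exact fun s hs => outside r s (by simp only [mem_range] at hr; omega)
  · exact fun r hr => sum_eq_zero fun s _ => outside r s (by omega)

theorem sum_coeff_partial₁ {n N : ℕ} (hN : n < N) (u v w : ℝ) :
    ∑ r ∈ range N, ∑ s ∈ range N, coeff n r s * (w ^ r * v ^ s *
      ((n - 3 * r - 2 * s : ℕ) * u ^ (n - 3 * r - 2 * s - 1))) = n * H3v (n - 1) u v w := by
  rw [eq_sum (R := N) (S := N) (by omega) (by omega), mul_sum]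
  refine sum_congr rfl fun r _ => ?_
  rw [mul_sum]
  refine sum_congr rfl fun s _ => ?_
  rw [show n - 3 * r - 2 * s - 1 = n - 1 - 3 * r - 2 * s by omega]
  linear_combination (w ^ r * v ^ s * u ^ (n - 1 - 3 * r - 2 * s)) * coeff_mul_sub n r s

theorem sum_coeff_partial₂ {n N : ℕ} (hN : n < N) (u v w : ℝ) :
    ∑ r ∈ range (N + 1), ∑ s ∈ range (N + 1), coeff n r s * (w ^ r * (s * v ^ (s - 1)) *
      u ^ (n - 3 * r - 2 * s)) = n.descFactorial 2 * H3v (n - 2) u v w := by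
  rw [eq_sum (R := N + 1) (S := N) (by omega) (by omega), mul_sum]
  refine sum_congr rfl fun r _ => ?_
  rw [sum_range_succ', mul_sum]
  simp only [CharP.cast_eq_zero, zero_mul, mul_zero, add_zero]
  refine sum_congr rfl fun s _ => ?_
  rw [show n - 3 * r - 2 * (s + 1) = n - 2 - 3 * r - 2 * s by omega, Nat.add_sub_cancel]
  linear_combination (w ^ r * v ^ s * u ^ (n - 2 - 3 * r - 2 * s)) * coeff_succ_right_mul n r s

theorem sum_coeff_partial₃ {n N : ℕ} (hN : n < N) (u v w : ℝ) :
    ∑ r ∈ range (N + 1), ∑ s ∈ range (N + 1), coeff n r s * (r * w ^ (r - 1) * v ^ s *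
      u ^ (n - 3 * r - 2 * s)) = n.descFactorial 3 * H3v (n - 3) u v w := by
  rw [eq_sum (R := N) (S := N + 1) (by omega) (by omega), mul_sum, sum_range_succ']
  simp only [CharP.cast_eq_zero, zero_mul, mul_zero, sum_const_zero, add_zero]
  refine sum_congr rfl fun r _ => ?_
  rw [mul_sum]
  refine sum_congr rfl fun s _ => ?_
  rw [show n - 3 * (r + 1) - 2 * s = n - 3 - 3 * r - 2 * s by omega, Nat.add_sub_cancel]
  linear_combination (w ^ r * v ^ s * u ^ (n - 3 - 3 * r - 2 * s)) * coeff_succ_left_mul n r s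

theorem hasDerivAt_comp {u v w : ℝ → ℝ} {u' v' w' t : ℝ} (n : ℕ) (hu : HasDerivAt u u' t)
    (hv : HasDerivAt v v' t) (hw : HasDerivAt w w' t) :
    HasDerivAt (fun t => H3v n (u t) (v t) (w t))
      (u' * (n * H3v (n - 1) (u t) (v t) (w t)) +
        v' * (n.descFactorial 2 * H3v (n - 2) (u t) (v t) (w t)) +
        w' * (n.descFactorial 3 * H3v (n - 3) (u t) (v t) (w t))) t := by
  rw [← sum_coeff_partial₁ (N := n + 2) (by omega),
    ← sum_coeff_partial₂ (N := n + 1) (by omega),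
    ← sum_coeff_partial₃ (N := n + 1) (by omega)]
  simp only [eq_sum (n := n) (R := n + 2) (S := n + 2) (by omega) (by omega), mul_sum,
    ← sum_add_distrib]
  refine HasDerivAt.fun_sum fun r _ => HasDerivAt.fun_sum fun s _ => ?_
  exact ((((hw.fun_pow r).fun_mul (hv.fun_pow s)).fun_mul
    (hu.fun_pow (n - 3 * r - 2 * s))).const_mul (coeff n r s)).congr_deriv (by ring)

theorem hasDerivAt_add_const (n : ℕ) (a v w x : ℝ) :
    HasDerivAt (fun x => H3v n (x + a) v w) (n * H3v (n - 1) (x + a) v w) x := by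
  simpa using hasDerivAt_comp n ((hasDerivAt_id x).add_const a) (hasDerivAt_const x v)
    (hasDerivAt_const x w)

theorem iterate_deriv_add_const (n j : ℕ) (a v w : ℝ) :
    deriv^[j] (fun x => H3v n (x + a) v w) =
      fun x => n.descFactorial j * H3v (n - j) (x + a) v w := by
  induction j with
  | zero => simp
  | succ j ih =>
    ext x
    rw [Function.iterate_succ_apply', ih, Nat.descFactorial_succ, Nat.sub_succ',
      ((hasDerivAt_add_const (n - j) a v w x).const_mul _).deriv]
    push_cast
    ring

theorem apply_zero_zero (n : ℕ) (x : ℝ) : H3v n x 0 0 = x ^ n := by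
  rw [eq_sum (R := n + 1) (S := n + 1) (lt_add_one n) (lt_add_one n), sum_eq_single 0,
    sum_eq_single 0]
  all_goals simp +contextual [coeff]

end H3v

theorem shifted_hermite_solves_pde_general (α β γ : ℝ) (n : ℕ)
    (Ψ : ℝ → ℝ → ℝ)
    (hΨ : ∀ x y : ℝ, Ψ x y = H3v n (x + α * y) (β * y) (γ * y)) :
    (∀ x y : ℝ,
      deriv (fun t => Ψ x t) y =
        α * deriv (fun s => Ψ s y) x + β * deriv (deriv (fun s => Ψ s y)) x
          + γ * deriv (deriv (deriv (fun s => Ψ s y))) x) ∧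
    (∀ x : ℝ, Ψ x 0 = x ^ n) := by
  refine ⟨fun x y => ?_, fun x => by simp [hΨ, H3v.apply_zero_zero]⟩
  have hx (j : ℕ) : deriv^[j] (fun s => Ψ s y) =
      fun s => n.descFactorial j * H3v (n - j) (s + α * y) (β * y) (γ * y) := by
    simp only [hΨ, H3v.iterate_deriv_add_const]
  have hy := H3v.hasDerivAt_comp n (((hasDerivAt_id' y).const_mul α).const_add x)
    ((hasDerivAt_id' y).const_mul β) ((hasDerivAt_id' y).const_mul γ)
  change deriv (fun t => Ψ x t) y = α * deriv^[1] (fun s => Ψ s y) x +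
    β * deriv^[2] (fun s => Ψ s y) x + γ * deriv^[3] (fun s => Ψ s y) x
  rw [hx 1, hx 2, hx 3]
  simp only [hΨ, hy.deriv, Nat.descFactorial_one]
  ring

theorem shifted_hermite_solves_pde (α β γ : ℝ) (n : ℕ) (hn : 1 ≤ n)
    (Ψ : ℝ → ℝ → ℝ)
    (hΨ : ∀ x y : ℝ, Ψ x y = H3v n (x + α * y) (β * y) (γ * y)) :
    (∀ x y : ℝ,
      deriv (fun t => Ψ x t) y =
        α * deriv (fun s => Ψ s y) x + β * deriv (deriv (fun s => Ψ s y)) x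
          + γ * deriv (deriv (deriv (fun s => Ψ s y))) x) ∧
    (∀ x : ℝ, Ψ x 0 = x ^ n) :=
  shifted_hermite_solves_pde_general α β γ n Ψ hΨ
end
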